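/- arXiv:1807.08901 — 2 statements merged into one kernel-verified Lean document; each statement's English description precedes it below -/
import Mathlib

section
/- The steering fraction equals the steering robustness: for any assemblage {σ_{a|x}} on C^d, sup over {F_{a|x} ≥ 0} of [tr Σ_{a,x} F_{a|x} σ_{a|x}] / [sup over unsteerable assemblages τ of tr Σ_{a,x} F_{a|x} τ_{a|x}] equals sup over {F_{a|x} ≥ 0 with Σ_{a,x} D(a|x,λ) F_{a|x} ≤ 𝟙 for all deterministic strategies λ} of tr Σ_{a,x} F_{a|x} σ_{a|x}. -/
open Matrix BigOperators
open scoped ComplexOrder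

/-- Unsteerable assemblage in deterministic LHS form. -/
def IsUnsteerableDet {d : ℕ} {A X : Type} [Fintype A] [Fintype X]
    [DecidableEq A] [DecidableEq X]
    (τ : A → X → Matrix (Fin d) (Fin d) ℂ) : Prop :=
  ∃ ρ : (X → A) → Matrix (Fin d) (Fin d) ℂ,
    (∀ l, (ρ l).PosSemidef) ∧ (∑ l, (ρ l).trace = 1) ∧
    (∀ a x, τ a x = ∑ l, if l x = a then ρ l else 0)

/-- The value of a witness `F` on an assemblage `τ`. -/
noncomputable def witVal {d : ℕ} {A X : Type} [Fintype A] [Fintype X]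
    (F τ : A → X → Matrix (Fin d) (Fin d) ℂ) : ℝ :=
  (∑ a, ∑ x, (F a x * τ a x).trace).re

/-- Best value of the witness `F` over unsteerable assemblages. -/
noncomputable def lhsVal {d : ℕ} {A X : Type} [Fintype A] [Fintype X]
    [DecidableEq A] [DecidableEq X]
    (F : A → X → Matrix (Fin d) (Fin d) ℂ) : ℝ :=
  sSup {t : ℝ | ∃ τ : A → X → Matrix (Fin d) (Fin d) ℂ,
    IsUnsteerableDet τ ∧ t = witVal F τ}

/-! Unsteerable assemblages are the mixtures `∑_λ D(·|·,λ) ρ_λ`, so `witVal F τ = ∑_λ tr(M_λ ρ_λ)`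
with `M_λ = ∑ₓ F_{λ(x)|x}`. Testing against density matrices concentrated on one strategy shows
that, for `c ≥ 0`, `lhsVal F ≤ c` exactly when `M_λ ≤ c • 1` for every `λ`. Hence the constraint
on the right-hand side says `lhsVal F ≤ 1`, and both sides are suprema of the positively
homogeneous `witVal · σ` over the cone of positive witnesses, one normalised by `lhsVal`, the other
cut off at `lhsVal ≤ 1`; these agree. Finiteness comes from `F_{a|x} ≤ M_{const a}`, which gives
`witVal F σ ≤ |X| · lhsVal F`. -/

theorem sSup_div_eq_sSup_of_homogeneous {W : Type*} [SMul ℝ W] {p q : W → Prop} {f g : W → ℝ}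
    {B : ℝ} (hp : ∀ F, p F → ∀ r : ℝ, 0 < r → p (r • F))
    (hf : ∀ F, p F → ∀ r : ℝ, 0 < r → f (r • F) = r * f F)
    (hg : ∀ F, p F → ∀ r : ℝ, 0 < r → g (r • F) = r * g F)
    (hq : ∀ F, p F → (q F ↔ g F ≤ 1)) (hf0 : ∀ F, p F → 0 ≤ f F)
    (hB0 : 0 ≤ B) (hB : ∀ F, p F → f F ≤ B * g F) :
    sSup {r | ∃ F, p F ∧ 0 < g F ∧ r = f F / g F} = sSup {r | ∃ F, p F ∧ q F ∧ r = f F} := by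
  set S := {r | ∃ F, p F ∧ 0 < g F ∧ r = f F / g F}
  set T := {r | ∃ F, p F ∧ q F ∧ r = f F}
  have hST : S ⊆ T := by
    rintro _ ⟨F, hF, hgF, rfl⟩
    have hr := inv_pos.mpr hgF
    refine ⟨(g F)⁻¹ • F, hp F hF _ hr, (hq _ (hp F hF _ hr)).mpr ?_, ?_⟩
    · rw [hg F hF _ hr, inv_mul_cancel₀ hgF.ne']
    · rw [hf F hF _ hr, div_eq_inv_mul]
  have hT : BddAbove T := ⟨B, by
    rintro _ ⟨F, hF, hqF, rfl⟩
    exact (hB F hF).trans (mul_le_of_le_one_right hB0 ((hq F hF).mp hqF))⟩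
  have hS0 : 0 ≤ sSup S := Real.sSup_nonneg <| by
    rintro _ ⟨F, hF, hgF, rfl⟩
    exact div_nonneg (hf0 F hF) hgF.le
  have hT0 : 0 ≤ sSup T := Real.sSup_nonneg <| by
    rintro _ ⟨F, hF, -, rfl⟩
    exact hf0 F hF
  refine le_antisymm (Real.sSup_le (fun r hr => le_csSup hT (hST hr)) hT0) (Real.sSup_le ?_ hS0)
  rintro _ ⟨F, hF, hqF, rfl⟩
  rcases lt_or_ge 0 (g F) with hgF | hgF
  · calc f F ≤ f F / g F := le_div_self (hf0 F hF) hgF ((hq F hF).mp hqF)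
      _ ≤ sSup S := le_csSup (hT.mono hST) ⟨F, hF, hgF, rfl⟩
  · exact ((hB F hF).trans (mul_nonpos_of_nonneg_of_nonpos hB0 hgF)).trans hS0

open scoped MatrixOrder

namespace Matrix

variable {n : Type*} [Fintype n]

theorem PosSemidef.trace_mul_nonneg {A B : Matrix n n ℂ} (hA : A.PosSemidef) (hB : B.PosSemidef) :
    0 ≤ (A * B).trace := by
  classical
  open scoped Norms.L2Operator in
  obtain ⟨C, rfl⟩ := CStarAlgebra.nonneg_iff_eq_star_mul_self.mp hA.nonneg
  rw [mul_assoc, trace_mul_comm]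
  exact (hB.mul_mul_conjTranspose_same C).trace_nonneg

theorem trace_mul_le_trace_mul_of_le {A B C : Matrix n n ℂ} (hAB : A ≤ B) (hC : C.PosSemidef) :
    (A * C).trace ≤ (B * C).trace := by
  simpa [sub_mul] using PosSemidef.trace_mul_nonneg hAB hC

theorem trace_mul_vecMulVec_star (A : Matrix n n ℂ) (v : n → ℂ) :
    (A * vecMulVec v (star v)).trace = star v ⬝ᵥ A *ᵥ v := by
  simp only [trace, diag, mul_apply, vecMulVec_apply, dotProduct, mulVec, Finset.mul_sum]
  exact Finset.sum_congr rfl fun i _ => Finset.sum_congr rfl fun j _ => by ring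

theorem PosSemidef.of_forall_re_trace_mul_nonneg {H : Matrix n n ℂ} (hH : H.IsHermitian)
    (h : ∀ ρ : Matrix n n ℂ, ρ.PosSemidef → 0 ≤ (H * ρ).trace.re) : H.PosSemidef := by
  refine .of_dotProduct_mulVec_nonneg hH fun v => Complex.le_def.mpr ⟨?_, ?_⟩
  · simpa [trace_mul_vecMulVec_star] using h _ (posSemidef_vecMulVec_self_star v)
  · exact (hH.im_star_dotProduct_mulVec_self v).symm

theorem IsHermitian.exists_le_smul_one [DecidableEq n] {A : Matrix n n ℂ} (hA : A.IsHermitian) :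
    ∃ c : ℝ, A ≤ c • (1 : Matrix n n ℂ) := by
  open scoped Norms.L2Operator in
  exact ⟨‖A‖, Algebra.algebraMap_eq_smul_one (A := Matrix n n ℂ) ‖A‖ ▸
    IsSelfAdjoint.le_algebraMap_norm_self hA.isSelfAdjoint⟩

theorem PosSemidef.ofReal_re_trace {ρ : Matrix n n ℂ} (hρ : ρ.PosSemidef) :
    (ρ.trace.re : ℂ) = ρ.trace :=
  Complex.ext rfl (Complex.le_def.mp hρ.trace_nonneg).2

theorem le_smul_one_of_forall_density [DecidableEq n] {A : Matrix n n ℂ} (hA : A.IsHermitian)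
    {c : ℝ} (h : ∀ ρ : Matrix n n ℂ, ρ.PosSemidef → ρ.trace = 1 → (A * ρ).trace.re ≤ c) :
    A ≤ c • (1 : Matrix n n ℂ) := by
  refine PosSemidef.of_forall_re_trace_mul_nonneg
    ((isHermitian_one.smul (.all c)).sub hA) fun ρ hρ => ?_
  -- a nonzero positive semidefinite `ρ` is a positive multiple of a density matrix
  suffices (A * ρ).trace.re ≤ c * ρ.trace.re by simpa [sub_mul, Complex.smul_re] using this
  set t := ρ.trace.re
  have htr : ρ.trace = t := hρ.ofReal_re_trace.symm
  have ht0 : 0 ≤ t := by simpa using (Complex.le_def.mp hρ.trace_nonneg).1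
  rcases ht0.eq_or_lt with ht | ht
  · have hρ0 : ρ = 0 := hρ.trace_eq_zero_iff.mp (by rw [htr, ← ht, Complex.ofReal_zero])
    simp [hρ0, ← ht]
  · have := h (t⁻¹ • ρ) (hρ.smul (inv_nonneg.mpr ht.le)) (by
      rw [trace_smul, htr, Complex.real_smul, ← Complex.ofReal_mul, inv_mul_cancel₀ ht.ne',
        Complex.ofReal_one])
    rw [mul_smul_comm, trace_smul, Complex.smul_re, smul_eq_mul, inv_mul_le_iff₀ ht] at this
    linarith

end Matrix

section Steering

variable {d : ℕ} {A X : Type} [Fintype A] [Fintype X]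

theorem witVal_smul (r : ℝ) (F τ : A → X → Matrix (Fin d) (Fin d) ℂ) :
    witVal (r • F) τ = r * witVal F τ := by
  simp [witVal, Finset.mul_sum]

theorem witVal_nonneg {F τ : A → X → Matrix (Fin d) (Fin d) ℂ}
    (hF : ∀ a x, (F a x).PosSemidef) (hτ : ∀ a x, (τ a x).PosSemidef) : 0 ≤ witVal F τ := by
  simp only [witVal, Complex.re_sum]
  exact Finset.sum_nonneg fun a _ => Finset.sum_nonneg fun x _ =>
    (Complex.le_def.mp ((hF a x).trace_mul_nonneg (hτ a x))).1

theorem witVal_le_card_mul {F σ : A → X → Matrix (Fin d) (Fin d) ℂ} {c : ℝ}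
    (hF : ∀ a x, (F a x).PosSemidef) (hσ : ∀ a x, (σ a x).PosSemidef)
    (hσtr : ∀ x, (∑ a, σ a x).trace = 1)
    (hc : ∀ l : X → A, ∑ x, F (l x) x ≤ c • (1 : Matrix (Fin d) (Fin d) ℂ)) :
    witVal F σ ≤ Fintype.card X * c := by
  have hFc : ∀ a x, F a x ≤ c • (1 : Matrix (Fin d) (Fin d) ℂ) := fun a x =>
    (Finset.single_le_sum (f := fun x' => F a x') (fun x' _ => (hF a x').nonneg)
      (Finset.mem_univ x)).trans (hc fun _ => a)
  calc witVal F σ ≤ ∑ a, ∑ x, (c • (1 : Matrix (Fin d) (Fin d) ℂ) * σ a x).trace.re := by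
        simp only [witVal, Complex.re_sum]
        gcongr with a _ x _
        exact trace_mul_le_trace_mul_of_le (hFc a x) (hσ a x)
    _ = Fintype.card X * c := by
        simp_rw [smul_mul, one_mul, trace_smul, Complex.smul_re, smul_eq_mul, ← Finset.mul_sum]
        rw [Finset.sum_comm]
        simp [← Complex.re_sum, ← trace_sum, hσtr, mul_comm]

variable [DecidableEq A] [DecidableEq X]

theorem witVal_eq_sum_strategies (F : A → X → Matrix (Fin d) (Fin d) ℂ)
    (ρ : (X → A) → Matrix (Fin d) (Fin d) ℂ) :
    witVal F (fun a x => ∑ l, if l x = a then ρ l else 0)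
      = ∑ l, ((∑ x, F (l x) x) * ρ l).trace.re := by
  rw [witVal, ← Complex.re_sum]
  congr 1
  calc ∑ a, ∑ x, (F a x * ∑ l, if l x = a then ρ l else 0).trace
      = ∑ x, ∑ l, ∑ a, if l x = a then (F a x * ρ l).trace else 0 := by
        simp only [Finset.mul_sum, mul_ite, mul_zero, trace_sum, apply_ite trace, trace_zero]
        rw [Finset.sum_comm]
        exact Finset.sum_congr rfl fun x _ => Finset.sum_comm
    _ = ∑ l, ((∑ x, F (l x) x) * ρ l).trace := by
        simp only [Finset.sum_ite_eq, Finset.mem_univ, if_true, Finset.sum_mul, trace_sum]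
        exact Finset.sum_comm

theorem witVal_le_of_le_smul_one {F τ : A → X → Matrix (Fin d) (Fin d) ℂ} {c : ℝ}
    (hc : ∀ l : X → A, ∑ x, F (l x) x ≤ c • (1 : Matrix (Fin d) (Fin d) ℂ))
    (hτ : IsUnsteerableDet τ) : witVal F τ ≤ c := by
  obtain ⟨ρ, hρ, hρtr, hτ⟩ := hτ
  obtain rfl : τ = fun a x => ∑ l, if l x = a then ρ l else 0 := funext₂ hτ
  calc witVal _ _ ≤ ∑ l, (c • (1 : Matrix (Fin d) (Fin d) ℂ) * ρ l).trace.re := by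
        rw [witVal_eq_sum_strategies]
        gcongr with l
        exact trace_mul_le_trace_mul_of_le (hc l) (hρ l)
    _ = c := by
        simp_rw [smul_mul, one_mul, trace_smul, Complex.smul_re, smul_eq_mul, ← Finset.mul_sum,
          ← Complex.re_sum, hρtr, Complex.one_re, mul_one]

theorem bddAbove_witVal_unsteerable {F : A → X → Matrix (Fin d) (Fin d) ℂ}
    (hF : ∀ a x, (F a x).IsHermitian) :
    BddAbove {t : ℝ | ∃ τ, IsUnsteerableDet τ ∧ t = witVal F τ} := by
  choose c hc using fun l : X → A =>
    IsHermitian.exists_le_smul_one (isSelfAdjoint_sum Finset.univ fun x _ => hF (l x) x)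
  obtain ⟨C, hC⟩ := Finite.bddAbove_range c
  refine ⟨C, ?_⟩
  rintro _ ⟨τ, hτ, rfl⟩
  exact witVal_le_of_le_smul_one
    (fun l => (hc l).trans (smul_le_smul_of_nonneg_right (hC ⟨l, rfl⟩) zero_le_one)) hτ

theorem witVal_le_lhsVal {F τ : A → X → Matrix (Fin d) (Fin d) ℂ}
    (hF : ∀ a x, (F a x).IsHermitian) (hτ : IsUnsteerableDet τ) : witVal F τ ≤ lhsVal F :=
  le_csSup (bddAbove_witVal_unsteerable hF) ⟨τ, hτ, rfl⟩

theorem lhsVal_le {F : A → X → Matrix (Fin d) (Fin d) ℂ} {c : ℝ} (hc0 : 0 ≤ c)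
    (hc : ∀ l : X → A, ∑ x, F (l x) x ≤ c • (1 : Matrix (Fin d) (Fin d) ℂ)) : lhsVal F ≤ c :=
  Real.sSup_le (by rintro _ ⟨τ, hτ, rfl⟩; exact witVal_le_of_le_smul_one hc hτ) hc0

theorem re_trace_mul_le_lhsVal {F : A → X → Matrix (Fin d) (Fin d) ℂ}
    (hF : ∀ a x, (F a x).IsHermitian) (l : X → A) {ρ : Matrix (Fin d) (Fin d) ℂ}
    (hρ : ρ.PosSemidef) (htr : ρ.trace = 1) : ((∑ x, F (l x) x) * ρ).trace.re ≤ lhsVal F := by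
  have hτ : IsUnsteerableDet fun a x => ∑ l', if l' x = a then (if l' = l then ρ else 0) else 0 :=
    ⟨_, fun l' => by split_ifs; exacts [hρ, .zero], by simp [apply_ite, htr], fun _ _ => rfl⟩
  simpa [witVal_eq_sum_strategies, apply_ite, Finset.sum_ite_eq'] using witVal_le_lhsVal hF hτ

theorem sum_le_smul_one_of_lhsVal_le {F : A → X → Matrix (Fin d) (Fin d) ℂ}
    (hF : ∀ a x, (F a x).IsHermitian) {c : ℝ} (h : lhsVal F ≤ c) (l : X → A) :
    ∑ x, F (l x) x ≤ c • (1 : Matrix (Fin d) (Fin d) ℂ) :=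
  le_smul_one_of_forall_density (isSelfAdjoint_sum _ fun x _ => hF (l x) x) fun _ hρ htr =>
    (re_trace_mul_le_lhsVal hF l hρ htr).trans h

theorem lhsVal_smul {r : ℝ} (hr : 0 ≤ r) (F : A → X → Matrix (Fin d) (Fin d) ℂ) :
    lhsVal (r • F) = r * lhsVal F := by
  simp only [lhsVal, witVal_smul]
  rw [← smul_eq_mul, ← Real.sSup_smul_of_nonneg hr]
  congr 1
  ext t
  simp [Set.mem_smul_set, eq_comm]

end Steering

/-- The steering fraction equals (one plus) the steering robustness: the supremum of
`tr ∑ F σ / sup_{τ∈LHS} tr ∑ F τ` over PSD witnesses `F` with positive LHS value equals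
the supremum of `tr ∑ F σ` over PSD witnesses satisfying
`∑_{a,x} D(a|x,λ) F_{a|x} ≤ 𝟙` for all deterministic strategies `λ`. -/
theorem steering_fraction_eq_steering_robustness
    {d : ℕ} {A X : Type} [Fintype A] [Fintype X] [DecidableEq A] [DecidableEq X]
    (σ : A → X → Matrix (Fin d) (Fin d) ℂ)
    (hpos : ∀ a x, (σ a x).PosSemidef)
    (htr : ∀ x, (∑ a, σ a x).trace = 1) :
    sSup {r : ℝ | ∃ F : A → X → Matrix (Fin d) (Fin d) ℂ,
        (∀ a x, (F a x).PosSemidef) ∧ 0 < lhsVal F ∧ r = witVal F σ / lhsVal F}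
      = sSup {r : ℝ | ∃ F : A → X → Matrix (Fin d) (Fin d) ℂ,
        (∀ a x, (F a x).PosSemidef) ∧
        (∀ l : X → A, (1 - ∑ x, F (l x) x).PosSemidef) ∧ r = witVal F σ} := by
  have hconstraint (F : A → X → Matrix (Fin d) (Fin d) ℂ) (hF : ∀ a x, (F a x).PosSemidef) :
      (∀ l : X → A, (1 - ∑ x, F (l x) x).PosSemidef) ↔ lhsVal F ≤ 1 :=
    ⟨fun h => lhsVal_le zero_le_one fun l => by simpa using le_iff.mpr (h l),
      fun h l => le_iff.mp <| by
        simpa using sum_le_smul_one_of_lhsVal_le (fun a x => (hF a x).isHermitian) h l⟩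
  have hbound (F : A → X → Matrix (Fin d) (Fin d) ℂ) (hF : ∀ a x, (F a x).PosSemidef) :
      witVal F σ ≤ Fintype.card X * lhsVal F :=
    witVal_le_card_mul hF hpos htr
      (sum_le_smul_one_of_lhsVal_le (fun a x => (hF a x).isHermitian) le_rfl)
  exact sSup_div_eq_sSup_of_homogeneous (fun F hF r hr a x => (hF a x).smul hr.le)
    (fun F _ r _ => witVal_smul r F σ) (fun F _ r hr => lhsVal_smul hr.le F) hconstraint
    (fun F hF => witVal_nonneg hF hpos) (Nat.cast_nonneg _) hbound
end

section
/- For correlations generated by an unsteerable assemblage through any joint POVM, the MDI payoff is bounded: if σ_{a|x} = Σ_λ D(a|x,λ) ρ_λ is unsteerable on C^d, 0 ≤ E ≤ 𝟙 is a POVM element on C^d ⊗ C^d, ω_y are density matrices on C^d, and real coefficients β^{x,y}_a satisfy Σ_y β^{x,y}_a ω_y^⊤ = F_{a|x} − (α/|X|)𝟙 where {F_{a|x} ≥ 0} is a steering witness with LHS bound α = max_{τ∈LHS} tr Σ F_{a|x} τ_{a|x}, then Σ_{a,x,y} β^{x,y}_a tr[E(σ_{a|x} ⊗ ω_y)] ≤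 0. -/
open Matrix Kronecker BigOperators
open scoped ComplexOrder

/-!
Tracing out the first half of `E` against a hidden state `ρ_λ` leaves a positive operator
`Ẽ_λ` on the second system with `tr[E (ρ_λ ⊗ ω)] = tr[Ẽ_λ ω]`. Through the spanning relation the
payoff of `σ = ∑_λ D(·|·,λ) ρ_λ` becomes `∑ tr[F_{a|x} τ_{a|x}] - α ∑_λ tr Ẽ_λ`, where
`τ = ∑_λ D(·|·,λ) Ẽ_λᵀ` is again a deterministic LHS assemblage, only unnormalized. Normalizing
`τ` by its total trace and invoking the LHS bound `α` of the witness makes the payoff `≤ 0`.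
-/

namespace Matrix

variable {m n : Type*} [Fintype m] [Fintype n]

/-- The partial trace `tr₁[E (ρ ⊗ 𝟙)]` over the first factor: the POVM element that `E` induces
on the second system once the first one is prepared in `ρ`. -/
def effectiveOperator {R : Type*} [CommSemiring R] (E : Matrix (m × n) (m × n) R) :
    Matrix m m R →ₗ[R] Matrix n n R where
  toFun ρ := of fun j l => ∑ i, ∑ k, E (i, j) (k, l) * ρ k i
  map_add' ρ ρ' := by ext; simp only [add_apply, of_apply, mul_add, Finset.sum_add_distrib]
  map_smul' c ρ := by
    ext; simp only [smul_apply, of_apply, smul_eq_mul, Finset.mul_sum, RingHom.id_apply,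
      mul_left_comm]

omit [Fintype n] in
theorem effectiveOperator_apply {R : Type*} [CommSemiring R] (E : Matrix (m × n) (m × n) R)
    (ρ : Matrix m m R) (j l : n) :
    effectiveOperator E ρ j l = ∑ i, ∑ k, E (i, j) (k, l) * ρ k i := rfl

theorem trace_mul_kronecker_eq_trace_effectiveOperator_mul {R : Type*} [CommSemiring R]
    (E : Matrix (m × n) (m × n) R) (ρ : Matrix m m R) (M : Matrix n n R) :
    (E * (ρ ⊗ₖ M)).trace = (effectiveOperator E ρ * M).trace := by
  simp only [trace, diag, mul_apply, effectiveOperator_apply, kroneckerMap_apply,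
    Fintype.sum_prod_type, Finset.sum_mul, mul_assoc]
  rw [Finset.sum_comm]
  exact Finset.sum_congr rfl fun j _ => Finset.sum_comm_cycle

theorem effectiveOperator_vecMulVec {𝕜 : Type*} [RCLike 𝕜] (E : Matrix (m × n) (m × n) 𝕜)
    [DecidableEq n] (v : m → 𝕜) :
    effectiveOperator E (vecMulVec v (star v)) =
      (of fun (p : m × n) l => v p.1 * (1 : Matrix n n 𝕜) p.2 l)ᴴ * E *
        of fun (p : m × n) l => v p.1 * (1 : Matrix n n 𝕜) p.2 l := by
  ext j l
  simp only [effectiveOperator_apply, mul_apply, conjTranspose_apply, of_apply, one_apply,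
    vecMulVec_apply, Fintype.sum_prod_type, mul_ite, mul_one, mul_zero, apply_ite star,
    star_zero, ite_mul, zero_mul, Finset.sum_ite_eq', Finset.mem_univ, if_true, Finset.sum_mul]
  rw [Finset.sum_comm]
  exact Finset.sum_congr rfl fun i _ => Finset.sum_congr rfl fun k _ => by
    rw [Pi.star_apply]; ring

theorem PosSemidef.effectiveOperator {𝕜 : Type*} [RCLike 𝕜] {E : Matrix (m × n) (m × n) 𝕜}
    {ρ : Matrix m m 𝕜} (hE : E.PosSemidef) (hρ : ρ.PosSemidef) :
    (effectiveOperator E ρ).PosSemidef := by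
  classical
  obtain ⟨r, v, rfl⟩ := posSemidef_iff_eq_sum_vecMulVec.mp hρ
  rw [map_sum]
  exact posSemidef_sum _ fun i _ =>
    effectiveOperator_vecMulVec E (v i) ▸ hE.conjTranspose_mul_mul_same _

theorem sum_ofReal_mul_trace_mul_kronecker {Y : Type*} [Fintype Y] (E : Matrix (m × n) (m × n) ℂ)
    (ρ : Matrix m m ℂ) (ω : Y → Matrix n n ℂ) (β : Y → ℝ) :
    ∑ y, (β y : ℂ) * (E * (ρ ⊗ₖ ω y)).trace =
      ((∑ y, β y • (ω y)ᵀ) * (effectiveOperator E ρ)ᵀ).trace := by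
  simp_rw [trace_mul_kronecker_eq_trace_effectiveOperator_mul, Finset.sum_mul, trace_sum,
    smul_mul_assoc, ← transpose_mul, trace_smul, trace_transpose, Complex.real_smul]

end Matrix

section DeterministicAssemblage

variable {A X M : Type*} [Fintype A] [Fintype X] [DecidableEq A] [DecidableEq X]

/-- The assemblage `σ_{a|x} = ∑_λ D(a|x,λ) ρ_λ` of a deterministic local hidden-state model. -/
def detAssemblage [AddCommMonoid M] (ρ : (X → A) → M) (a : A) (x : X) : M :=
  ∑ l, if l x = a then ρ l else 0

theorem map_detAssemblage [AddCommMonoid M] {N F : Type*} [AddCommMonoid N] [FunLike F M N]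
    [AddMonoidHomClass F M N] (f : F) (ρ : (X → A) → M) (a : A) (x : X) :
    f (detAssemblage ρ a x) = detAssemblage (fun l => f (ρ l)) a x := by
  simp only [detAssemblage, map_sum, apply_ite f, map_zero]

theorem sum_sum_detAssemblage [AddCommMonoid M] (ρ : (X → A) → M) :
    ∑ a, ∑ x, detAssemblage ρ a x = Fintype.card X • ∑ l, ρ l := by
  rw [Finset.sum_comm]
  simp [detAssemblage, Finset.sum_comm (γ := A)]

theorem detAssemblage_smul {R : Type*} [Monoid R] [AddCommMonoid M] [DistribMulAction R M]
    (c : R) (ρ : (X → A) → M) (a : A) (x : X) :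
    detAssemblage (c • ρ) a x = c • detAssemblage ρ a x := by
  simp only [detAssemblage, Finset.smul_sum, smul_ite, smul_zero, Pi.smul_apply]

end DeterministicAssemblage

theorem re_sum_trace_mul_detAssemblage_le {d : ℕ} {A X : Type} [Fintype A] [Fintype X]
    [DecidableEq A] [DecidableEq X] {F : A → X → Matrix (Fin d) (Fin d) ℂ} {α : ℝ}
    (hα : α ∈ upperBounds {t : ℝ | ∃ τ : A → X → Matrix (Fin d) (Fin d) ℂ,
      IsUnsteerableDet τ ∧ t = (∑ a, ∑ x, (F a x * τ a x).trace).re})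
    {ρ : (X → A) → Matrix (Fin d) (Fin d) ℂ} (hρ : ∀ l, (ρ l).PosSemidef) :
    (∑ a, ∑ x, (F a x * detAssemblage ρ a x).trace).re ≤ α * (∑ l, (ρ l).trace).re := by
  have hT : 0 ≤ ∑ l, (ρ l).trace := Finset.sum_nonneg fun l _ => (hρ l).trace_nonneg
  obtain ⟨t, ht, hTt⟩ : ∃ t : ℝ, 0 ≤ t ∧ ∑ l, (ρ l).trace = t :=
    ⟨_, (Complex.nonneg_iff.mp hT).1,
      Complex.eq_re_of_ofReal_le (r := 0) (by rwa [Complex.ofReal_zero])⟩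
  rw [hTt, Complex.ofReal_re]
  rcases ht.eq_or_lt with rfl | htpos
  · have hρ0 : ∀ l, ρ l = 0 := fun l => (hρ l).trace_eq_zero_iff.mp <|
      (Finset.sum_eq_zero_iff_of_nonneg fun l _ => (hρ l).trace_nonneg).mp
        (by rw [hTt, Complex.ofReal_zero]) l (Finset.mem_univ l)
    simp [detAssemblage, hρ0]
  · have hnormalized : IsUnsteerableDet (detAssemblage (t⁻¹ • ρ)) := by
      refine ⟨t⁻¹ • ρ, fun l => (hρ l).smul (inv_pos.mpr htpos).le, ?_, fun _ _ => rfl⟩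
      simp_rw [Pi.smul_apply, trace_smul, ← Finset.smul_sum, hTt, Complex.real_smul,
        ← Complex.ofReal_mul, inv_mul_cancel₀ htpos.ne', Complex.ofReal_one]
    have hle := hα ⟨_, hnormalized, rfl⟩
    simp_rw [detAssemblage_smul, mul_smul_comm, trace_smul, ← Finset.smul_sum, Complex.smul_re,
      smul_eq_mul] at hle
    rwa [inv_mul_le_iff₀ htpos, mul_comm] at hle

theorem mdi_payoff_nonpos_on_unsteerable_general
    {d : ℕ} {A X Y : Type} [Fintype A] [Fintype X] [Fintype Y]
    [DecidableEq A] [DecidableEq X]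
    (σ : A → X → Matrix (Fin d) (Fin d) ℂ)
    (hσ : IsUnsteerableDet σ)
    (E : Matrix (Fin d × Fin d) (Fin d × Fin d) ℂ)
    (hE : E.PosSemidef)
    (ω : Y → Matrix (Fin d) (Fin d) ℂ)
    (F : A → X → Matrix (Fin d) (Fin d) ℂ)
    (α : ℝ)
    (hα : IsGreatest {t : ℝ | ∃ τ : A → X → Matrix (Fin d) (Fin d) ℂ,
      IsUnsteerableDet τ ∧ t = (∑ a, ∑ x, (F a x * τ a x).trace).re} α)
    (β : A → X → Y → ℝ)
    (hβ : ∀ a x, ∑ y, β a x y • (ω y)ᵀ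
      = F a x - ((α / (Fintype.card X) : ℝ) : ℂ) • 1) :
    (∑ a, ∑ x, ∑ y, (β a x y : ℂ) * (E * (σ a x ⊗ₖ ω y)).trace).re ≤ 0 := by
  rcases isEmpty_or_nonempty X with hX | hX
  · simp
  obtain ⟨ρ, hρ, -, hσρ⟩ := hσ
  obtain rfl : σ = detAssemblage ρ := funext₂ hσρ
  set G := fun l => (effectiveOperator E (ρ l))ᵀ
  have hG : ∀ l, (G l).PosSemidef := fun l => (hE.effectiveOperator (hρ l)).transpose
  have hσG : ∀ a x, (effectiveOperator E (detAssemblage ρ a x))ᵀ = detAssemblage G a x := by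
    intro a x
    rw [map_detAssemblage]
    exact map_detAssemblage (transposeAddEquiv (Fin d) (Fin d) ℂ) _ a x
  have htrace : ∑ a, ∑ x, (detAssemblage G a x).trace = Fintype.card X • ∑ l, (G l).trace := by
    simpa only [trace_sum, trace_smul] using congrArg trace (sum_sum_detAssemblage G)
  have hcard : ((α / Fintype.card X : ℝ) : ℂ) * Fintype.card X = α := by
    push_cast; exact div_mul_cancel₀ _ (Nat.cast_ne_zero.mpr Fintype.card_ne_zero)
  calc (∑ a, ∑ x, ∑ y, (β a x y : ℂ) * (E * (detAssemblage ρ a x ⊗ₖ ω y)).trace).re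
      = (∑ a, ∑ x, (F a x * detAssemblage G a x).trace).re - α * (∑ l, (G l).trace).re := by
        simp_rw [sum_ofReal_mul_trace_mul_kronecker, hβ, hσG, sub_mul, trace_sub, smul_mul,
          one_mul, trace_smul, Finset.sum_sub_distrib, ← Finset.smul_sum, htrace, nsmul_eq_mul,
          smul_eq_mul, ← mul_assoc, hcard, Complex.sub_re, Complex.re_ofReal_mul]
    _ ≤ 0 := sub_nonpos.mpr (re_sum_trace_mul_detAssemblage_le hα.2 hG)

/-- For correlations generated by an unsteerable assemblage through any joint POVM
element, the MDI payoff built from a steering witness via the spanning relation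
`∑_y β^{x,y}_a ω_yᵀ = F_{a|x} − (α/|X|)𝟙` is nonpositive. -/
theorem mdi_payoff_nonpos_on_unsteerable
    {d : ℕ} {A X Y : Type} [Fintype A] [Fintype X] [Fintype Y]
    [DecidableEq A] [DecidableEq X]
    (σ : A → X → Matrix (Fin d) (Fin d) ℂ)
    (hσ : IsUnsteerableDet σ)
    (E : Matrix (Fin d × Fin d) (Fin d × Fin d) ℂ)
    (hE : E.PosSemidef) (hE1 : (1 - E).PosSemidef)
    (ω : Y → Matrix (Fin d) (Fin d) ℂ)
    (hωpos : ∀ y, (ω y).PosSemidef) (hωtr : ∀ y, (ω y).trace = 1)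
    (F : A → X → Matrix (Fin d) (Fin d) ℂ)
    (hF : ∀ a x, (F a x).PosSemidef)
    (α : ℝ)
    (hα : IsGreatest {t : ℝ | ∃ τ : A → X → Matrix (Fin d) (Fin d) ℂ,
      IsUnsteerableDet τ ∧ t = (∑ a, ∑ x, (F a x * τ a x).trace).re} α)
    (β : A → X → Y → ℝ)
    (hβ : ∀ a x, ∑ y, β a x y • (ω y)ᵀ
      = F a x - ((α / (Fintype.card X) : ℝ) : ℂ) • 1) :
    (∑ a, ∑ x, ∑ y, (β a x y : ℂ) * (E * (σ a x ⊗ₖ ω y)).trace).re ≤ 0 :=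
  mdi_payoff_nonpos_on_unsteerable_general σ hσ E hE ω F α hα β hβ
end
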